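/- Let ν > 0 and let α, μ, γ be real constants. Define u : ℝ × ℝ → ℝ by u(x,t) = (α + μ + (μ − α)·exp(η))/(1 + exp(η)) where η = α(x − μt − γ)/ν. Then u satisfies the Burgers' equation u_t + u·u_x − ν·u_xx = 0 at every point (x,t) ∈ ℝ × ℝ. -/

import Mathlib

/-!
The solution is `u = φ(α (x - μ t - γ) / ν)` for the kink profile
`φ(s) = (α + μ + (μ - α) eˢ) / (1 + eˢ) = μ - α tanh (s / 2)`. For a travelling wave
`u = φ(k (x - c t - γ))` the Burgers residual is `k ((φ - c) φ' - ν k φ'')`; with `k = α / ν`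
and `c = μ` it vanishes because the kink satisfies `(φ - μ) φ' = α φ''`.
-/

open Real

section TravellingWave

variable {φ φ' φ'' : ℝ → ℝ} {k c γ : ℝ}

lemma hasDerivAt_travellingWave_space (hφ : ∀ s, HasDerivAt φ (φ' s) s) (t x : ℝ) :
    HasDerivAt (fun y => φ (k * (y - c * t - γ))) (k * φ' (k * (x - c * t - γ))) x := by
  have hphase : HasDerivAt (fun y => k * (y - c * t - γ)) k x := by
    simpa using (((hasDerivAt_id x).sub_const (c * t)).sub_const γ).const_mul k
  exact ((hφ _).comp x hphase).congr_deriv (mul_comm _ _)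

lemma hasDerivAt_travellingWave_time (hφ : ∀ s, HasDerivAt φ (φ' s) s) (x t : ℝ) :
    HasDerivAt (fun τ => φ (k * (x - c * τ - γ))) (-(k * c) * φ' (k * (x - c * t - γ))) t := by
  have hphase : HasDerivAt (fun τ => k * (x - c * τ - γ)) (-(k * c)) t := by
    simpa using ((((hasDerivAt_id t).const_mul c).const_sub x).sub_const γ).const_mul k
  exact ((hφ _).comp t hphase).congr_deriv (mul_comm _ _)

lemma burgers_residual_travellingWave (hφ : ∀ s, HasDerivAt φ (φ' s) s)
    (hφ' : ∀ s, HasDerivAt φ' (φ'' s) s) (ν : ℝ) (u : ℝ → ℝ → ℝ)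
    (hu : ∀ x t, u x t = φ (k * (x - c * t - γ))) (x t : ℝ) :
    deriv (fun τ => u x τ) t + u x t * deriv (fun y => u y t) x
        - ν * deriv (deriv (fun y => u y t)) x =
      k * ((φ (k * (x - c * t - γ)) - c) * φ' (k * (x - c * t - γ))
        - ν * k * φ'' (k * (x - c * t - γ))) := by
  simp only [hu]
  have hux : deriv (fun y => φ (k * (y - c * t - γ))) =
      fun y => k * φ' (k * (y - c * t - γ)) :=
    funext fun y => (hasDerivAt_travellingWave_space hφ t y).deriv
  have huxx : deriv (fun y => k * φ' (k * (y - c * t - γ))) x =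
      k * (k * φ'' (k * (x - c * t - γ))) :=
    ((hasDerivAt_travellingWave_space hφ' t x).const_mul k).deriv
  rw [(hasDerivAt_travellingWave_time hφ x t).deriv, hux, huxx]
  ring

end TravellingWave

noncomputable section Kink

variable (α μ : ℝ)

def kinkProfile (s : ℝ) : ℝ := (α + μ + (μ - α) * exp s) / (1 + exp s)

def kinkProfileDeriv (s : ℝ) : ℝ := -2 * α * exp s / (1 + exp s) ^ 2

def kinkProfileDeriv2 (s : ℝ) : ℝ := -2 * α * exp s * (1 - exp s) / (1 + exp s) ^ 3

lemma hasDerivAt_kinkProfile (s : ℝ) :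
    HasDerivAt (kinkProfile α μ) (kinkProfileDeriv α s) s := by
  have hnum := ((hasDerivAt_exp s).const_mul (μ - α)).const_add (α + μ)
  have hden := (hasDerivAt_exp s).const_add 1
  refine (hnum.div hden (by positivity)).congr_deriv ?_
  unfold kinkProfileDeriv
  field_simp
  ring

lemma hasDerivAt_kinkProfileDeriv (s : ℝ) :
    HasDerivAt (kinkProfileDeriv α) (kinkProfileDeriv2 α s) s := by
  have hnum := (hasDerivAt_exp s).const_mul (-2 * α)
  have hden : HasDerivAt (fun s => (1 + exp s) ^ 2) (2 * (1 + exp s) * exp s) s := by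
    simpa using ((hasDerivAt_exp s).const_add 1).fun_pow 2
  refine (hnum.div hden (pow_ne_zero 2 (by positivity))).congr_deriv ?_
  unfold kinkProfileDeriv2
  field_simp
  ring

lemma kinkProfile_ode (s : ℝ) :
    (kinkProfile α μ s - μ) * kinkProfileDeriv α s = α * kinkProfileDeriv2 α s := by
  unfold kinkProfile kinkProfileDeriv kinkProfileDeriv2
  field_simp
  ring

end Kink

theorem burgers_travelling_wave_solution
    (ν α μ γ : ℝ) (hν : 0 < ν) (u : ℝ → ℝ → ℝ)
    (hu : ∀ x t : ℝ,
      u x t = (α + μ + (μ - α) * Real.exp (α * (x - μ * t - γ) / ν)) /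
              (1 + Real.exp (α * (x - μ * t - γ) / ν))) :
    ∀ x t : ℝ,
      deriv (fun τ => u x τ) t
        + u x t * deriv (fun y => u y t) x
        - ν * deriv (deriv (fun y => u y t)) x = 0 := by
  intro x t
  have hu' : ∀ x t, u x t = kinkProfile α μ (α / ν * (x - μ * t - γ)) := fun x t => by
    rw [hu, kinkProfile, div_mul_eq_mul_div]
  rw [burgers_residual_travellingWave (hasDerivAt_kinkProfile α μ)
    (hasDerivAt_kinkProfileDeriv α) ν u hu', mul_div_cancel₀ α hν.ne', kinkProfile_ode, sub_self,
    mul_zero]
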